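/- arXiv:2601.04353 — 2 statements merged into one kernel-verified Lean document; each statement's English description precedes it below -/
import Mathlib

section
/- Let k ≥ 2 and let g_1 ≤ g_2 ≤ … ≤ g_k be positive integers with sum g = g_1 + ⋯ + g_k. Then Σ_{1 ≤ i < j ≤ k} g_i g_j ≤ 2g − 3 holds if and only if the multiset {g_1, …, g_k} is one of: {1, g−1} (with g ≥ 2), {2, g−2} (with g ≥ 4), {3, 3} (so g = 6), or {1, 1, g−2} (with g ≥ 3). -/
private lemma aux_symm {k : ℕ} (f : Fin k → Fin k → ℤ) (hs : ∀ i j, f i j = f j i) :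
    2 * ∑ i : Fin k, ∑ j : Fin k, (if i < j then f i j else 0) =
      ∑ i : Fin k, ∑ j : Fin k, (if i ≠ j then f i j else 0) := by
  have h1 : (∑ i : Fin k, ∑ j : Fin k, (if i < j then f i j else 0))
      = ∑ i : Fin k, ∑ j : Fin k, (if j < i then f i j else 0) := by
    rw [Finset.sum_comm]
    exact Finset.sum_congr rfl fun i _ => Finset.sum_congr rfl fun j _ => by
      rw [hs]
  rw [two_mul]
  nth_rewrite 2 [h1]
  rw [← Finset.sum_add_distrib]
  refine Finset.sum_congr rfl fun i _ => ?_
  rw [← Finset.sum_add_distrib]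
  refine Finset.sum_congr rfl fun j _ => ?_
  rcases lt_trichotomy i j with h | h | h
  · simp [h, asymm h, h.ne]
  · simp [h]
  · simp [h, asymm h, h.ne']

private lemma aux_master {k : ℕ} (gs : Fin k → ℕ) :
    2 * (∑ i : Fin k, ∑ j : Fin k, if i < j then (gs i : ℤ) * gs j else 0) =
      (∑ i : Fin k, (gs i : ℤ)) ^ 2 - ∑ i : Fin k, (gs i : ℤ) ^ 2 := by
  rw [aux_symm _ (fun i j => mul_comm _ _), sq, Finset.sum_mul_sum]
  rw [← Finset.sum_sub_distrib]
  refine Finset.sum_congr rfl fun i _ => ?_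
  have h : ∀ j : Fin k, (if i ≠ j then (gs i : ℤ) * gs j else 0)
      = (gs i : ℤ) * gs j - (if i = j then (gs i : ℤ) * gs j else 0) := by
    intro j; by_cases h : i = j <;> simp [h]
  simp only [h]
  rw [Finset.sum_sub_distrib, Finset.sum_ite_eq]
  simp [sq]

private lemma aux_map {k : ℕ} (gs : Fin k → ℕ) (f : ℕ → ℤ) :
    ∑ i, f (gs i) = ((Multiset.map gs Finset.univ.val).map f).sum := by
  rw [Multiset.map_map]; rfl

/-- Classification of partitions `g = g₁ + ⋯ + g_k` (with `k ≥ 2` parts, sorted)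
for which the codimension `∑_{i<j} gᵢ gⱼ` is at most `2g - 3`. -/
theorem stmt_4 (k : ℕ) (hk : 2 ≤ k) (g : ℕ) (gs : Fin k → ℕ)
    (hpos : ∀ i, 1 ≤ gs i) (hmono : Monotone gs) (hsum : ∑ i, gs i = g) :
    ((∑ i : Fin k, ∑ j : Fin k, if i < j then (gs i : ℤ) * gs j else 0) ≤
        2 * (g : ℤ) - 3) ↔
      ((Multiset.map gs Finset.univ.val = {1, g - 1} ∧ 2 ≤ g) ∨
       (Multiset.map gs Finset.univ.val = {2, g - 2} ∧ 4 ≤ g) ∨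
       (Multiset.map gs Finset.univ.val = ({3, 3} : Multiset ℕ) ∧ g = 6) ∨
       (Multiset.map gs Finset.univ.val = {1, 1, g - 2} ∧ 3 ≤ g)) := by
  have hg : (g : ℤ) = ∑ i : Fin k, (gs i : ℤ) := by rw [← hsum]; push_cast; rfl
  have hS : 2 * (∑ i : Fin k, ∑ j : Fin k, if i < j then (gs i : ℤ) * gs j else 0)
      = (g : ℤ) ^ 2 - ∑ i : Fin k, (gs i : ℤ) ^ 2 := by
    rw [aux_master gs, ← hg]
  constructor
  · intro hle
    rcases lt_or_ge k 4 with hk4 | hk4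
    · interval_cases k
      · -- k = 2
        rw [Fin.sum_univ_two] at hsum
        have hab : gs 0 ≤ gs 1 := hmono (show (0 : Fin 2) ≤ 1 by decide)
        have ha := hpos 0
        have hb := hpos 1
        have hS2 : (∑ i : Fin 2, ∑ j : Fin 2, if i < j then (gs i : ℤ) * gs j else 0)
            = (gs 0 : ℤ) * gs 1 := by
          simp [Fin.sum_univ_two, show ¬((0:Fin 2) < 0) by decide,
            show (0:Fin 2) < 1 by decide, show ¬((1:Fin 2) < 0) by decide,
            show ¬((1:Fin 2) < 1) by decide]
        rw [hS2] at hle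
        have hM : Multiset.map gs Finset.univ.val = {gs 0, gs 1} := rfl
        by_cases h1 : gs 0 = 1
        · exact Or.inl ⟨by rw [hM, h1, show gs 1 = g - 1 by omega], by omega⟩
        · by_cases h2 : gs 0 = 2
          · exact Or.inr (Or.inl ⟨by rw [hM, h2, show gs 1 = g - 2 by omega], by omega⟩)
          · have ha3 : (3 : ℤ) ≤ (gs 0 : ℤ) := by exact_mod_cast show 3 ≤ gs 0 by omega
            have hb3 : (3 : ℤ) ≤ (gs 1 : ℤ) := by exact_mod_cast show 3 ≤ gs 1 by omega
            have hle' : (gs 0 : ℤ) * gs 1 ≤ 2 * ((gs 0 : ℤ) + gs 1) - 3 := by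
              rw [← hsum] at hle; push_cast at hle; linarith
            have hb4 : (gs 1 : ℤ) ≤ 3 := by
              nlinarith [mul_nonneg (by linarith : (0:ℤ) ≤ (gs 0 : ℤ) - 3)
                (by linarith : (0:ℤ) ≤ (gs 1 : ℤ) - 2)]
            have hb33 : gs 1 = 3 := by exact_mod_cast le_antisymm (by exact_mod_cast hb4) (by exact_mod_cast hb3)
            have ha33 : gs 0 = 3 := by omega
            exact Or.inr (Or.inr (Or.inl ⟨by rw [hM, ha33, hb33], by omega⟩))
      · -- k = 3
        rw [Fin.sum_univ_three] at hsum
        have hab : gs 0 ≤ gs 1 := hmono (show (0 : Fin 3) ≤ 1 by decide)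
        have hbc : gs 1 ≤ gs 2 := hmono (show (1 : Fin 3) ≤ 2 by decide)
        have ha := hpos 0
        have hb := hpos 1
        have hc := hpos 2
        have hS3 : (∑ i : Fin 3, ∑ j : Fin 3, if i < j then (gs i : ℤ) * gs j else 0)
            = (gs 0 : ℤ) * gs 1 + (gs 0 : ℤ) * gs 2 + (gs 1 : ℤ) * gs 2 := by
          simp [Fin.sum_univ_three, show ¬((0:Fin 3) < 0) by decide,
            show (0:Fin 3) < 1 by decide, show (0:Fin 3) < 2 by decide,
            show ¬((1:Fin 3) < 0) by decide, show ¬((1:Fin 3) < 1) by decide,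
            show (1:Fin 3) < 2 by decide, show ¬((2:Fin 3) < 0) by decide,
            show ¬((2:Fin 3) < 1) by decide, show ¬((2:Fin 3) < 2) by decide]
        rw [hS3] at hle
        have hle' : (gs 0 : ℤ) * gs 1 + (gs 0 : ℤ) * gs 2 + (gs 1 : ℤ) * gs 2
            ≤ 2 * ((gs 0 : ℤ) + gs 1 + gs 2) - 3 := by
          rw [← hsum] at hle; push_cast at hle; linarith
        have hb1 : gs 1 = 1 := by
          by_contra hb1
          have hb2 : (2 : ℤ) ≤ (gs 1 : ℤ) := by exact_mod_cast show 2 ≤ gs 1 by omega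
          have hc2 : (2 : ℤ) ≤ (gs 2 : ℤ) := by exact_mod_cast show 2 ≤ gs 2 by omega
          have ha1 : (1 : ℤ) ≤ (gs 0 : ℤ) := by exact_mod_cast ha
          nlinarith [mul_nonneg (by linarith : (0:ℤ) ≤ (gs 0 : ℤ) - 1)
              (by linarith : (0:ℤ) ≤ (gs 1 : ℤ) - 2),
            mul_nonneg (by linarith : (0:ℤ) ≤ (gs 0 : ℤ) - 1)
              (by linarith : (0:ℤ) ≤ (gs 2 : ℤ) - 2),
            mul_nonneg (by linarith : (0:ℤ) ≤ (gs 1 : ℤ) - 2)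
              (by linarith : (0:ℤ) ≤ (gs 2 : ℤ) - 2)]
        have ha1 : gs 0 = 1 := by omega
        have hM : Multiset.map gs Finset.univ.val = {gs 0, gs 1, gs 2} := rfl
        exact Or.inr (Or.inr (Or.inr
          ⟨by rw [hM, ha1, hb1, show gs 2 = g - 2 by omega], by omega⟩))
    · -- k ≥ 4 : contradiction
      exfalso
      have hkZ : (4 : ℤ) ≤ (k : ℤ) := by exact_mod_cast hk4
      have hkg : (k : ℤ) ≤ (g : ℤ) := by
        rw [hg]
        calc (k : ℤ) = ∑ _i : Fin k, (1 : ℤ) := by simp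
          _ ≤ ∑ i : Fin k, (gs i : ℤ) :=
            Finset.sum_le_sum fun i _ => by exact_mod_cast hpos i
      have hsq : ∑ i : Fin k, ((gs i : ℤ) - 1) ^ 2
          ≤ (∑ i : Fin k, ((gs i : ℤ) - 1)) ^ 2 :=
        Finset.sum_sq_le_sq_sum_of_nonneg fun i _ => by
          have := hpos i
          have : (1 : ℤ) ≤ (gs i : ℤ) := by exact_mod_cast this
          linarith
      have e1 : ∑ i : Fin k, ((gs i : ℤ) - 1) ^ 2
          = (∑ i : Fin k, (gs i : ℤ) ^ 2) - 2 * (∑ i : Fin k, (gs i : ℤ)) + k := by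
        have : ∀ x : ℤ, (x - 1) ^ 2 = x ^ 2 - 2 * x + 1 := fun x => by ring
        simp only [this]
        rw [Finset.sum_add_distrib, Finset.sum_sub_distrib, Finset.mul_sum]
        simp [Finset.card_univ]
      have e2 : ∑ i : Fin k, ((gs i : ℤ) - 1) = (∑ i : Fin k, (gs i : ℤ)) - k := by
        rw [Finset.sum_sub_distrib]; simp [Finset.card_univ]
      rw [e1, e2, ← hg] at hsq
      nlinarith [hS, hle, hsq, hkg, hkZ,
        mul_nonneg (by linarith : (0:ℤ) ≤ 2 * (k:ℤ) - 6) (by linarith : (0:ℤ) ≤ (g:ℤ) - k),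
        mul_nonneg (by linarith : (0:ℤ) ≤ (k:ℤ) - 1) (by linarith : (0:ℤ) ≤ (k:ℤ) - 4)]
  · have key : ∀ q : ℤ, (∑ i : Fin k, (gs i : ℤ) ^ 2) = q →
        (g : ℤ) ^ 2 - q ≤ 2 * (2 * (g : ℤ) - 3) →
        (∑ i : Fin k, ∑ j : Fin k, if i < j then (gs i : ℤ) * gs j else 0) ≤
          2 * (g : ℤ) - 3 := by
      intro q hq hineq
      rw [hq] at hS
      linarith
    rintro (⟨hM, h2⟩ | ⟨hM, h4⟩ | ⟨hM, h6⟩ | ⟨hM, h3⟩) <;>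
      have hq := aux_map gs (fun n : ℕ => (n : ℤ) ^ 2) <;>
      rw [hM] at hq <;>
      simp only [Multiset.map_cons, Multiset.map_singleton, Multiset.sum_cons,
        Multiset.sum_singleton, Multiset.insert_eq_cons] at hq
    · rw [show ((g - 1 : ℕ) : ℤ) = (g : ℤ) - 1 by omega] at hq
      push_cast at hq
      exact key _ hq (by nlinarith [show (2:ℤ) ≤ (g:ℤ) from by exact_mod_cast h2])
    · rw [show ((g - 2 : ℕ) : ℤ) = (g : ℤ) - 2 by omega] at hq
      push_cast at hq
      exact key _ hq (by nlinarith [show (4:ℤ) ≤ (g:ℤ) from by exact_mod_cast h4])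
    · subst h6
      norm_num at hq
      exact key _ hq (by norm_num)
    · rw [show ((g - 2 : ℕ) : ℤ) = (g : ℤ) - 2 by omega] at hq
      push_cast at hq
      exact key _ hq (by nlinarith [show (3:ℤ) ≤ (g:ℤ) from by exact_mod_cast h3])
end

section
/- For the polynomial ring ℚ[z_1, z_2, z_3, ℓ_1, …, ℓ_6] (all variables in degree 1), let [·]_j denote the degree-j homogeneous part, and set c(N) = (1+ℓ_1)⋯(1+ℓ_6)(1 + z_1 + z_3)(1 + z_2 + z_3). Then the polynomial (z_1 + z_3)(z_2 + z_3)·ℓ_1⋯ℓ_6 − z_3·[c(N)/(1+z_3)]_7 − z_1 z_2·[c(N)/((1+z_1)(1+z_2))]_6 is divisible by z_1 z_2 z_3, where [P/(1+z)]_j is interpreted by expanding 1/(1+z) as a geometric series and taking the degree-j homogeneous part. -/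
open MvPolynomial

noncomputable abbrev PP := MvPolynomial (Fin 3 ⊕ Fin 6) ℚ

noncomputable def Af (k : ℕ) : PP :=
  homogeneousComponent k (∏ i : Fin 6, (1 + X (Sum.inr i)))

noncomputable def Bf (j : ℕ) : PP :=
  if j = 0 then 1
  else if j = 1 then X (Sum.inl 0) + X (Sum.inl 1) + (X (Sum.inl 2) + X (Sum.inl 2))
  else if j = 2 then (X (Sum.inl 0) + X (Sum.inl 2)) * (X (Sum.inl 1) + X (Sum.inl 2))
  else 0

lemma hc_of_isHom {p : PP} {n m : ℕ} (h : p.IsHomogeneous n) :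
    homogeneousComponent m p = if m = n then p else 0 :=
  homogeneousComponent_of_mem ((mem_homogeneousSubmodule _ _).2 h)

lemma Af_hom (k : ℕ) : (Af k).IsHomogeneous k :=
  homogeneousComponent_isHomogeneous k _

lemma Bf_hom : ∀ j ∈ Finset.range 3, (Bf j).IsHomogeneous j := by
  intro j hj
  simp only [Finset.mem_range] at hj
  interval_cases j
  · exact isHomogeneous_one _ _
  · exact ((((isHomogeneous_X _ _).add (isHomogeneous_X _ _))).add
      ((isHomogeneous_X _ _).add (isHomogeneous_X _ _)))
  · simpa [Bf] using (((isHomogeneous_X _ _).add (isHomogeneous_X _ _)).mul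
      ((isHomogeneous_X _ _).add (isHomogeneous_X _ _)))

lemma negX_pow_hom (c : Fin 3 ⊕ Fin 6) (m : ℕ) :
    ((-X c : PP) ^ m).IsHomogeneous m := by
  simpa using (((homogeneousSubmodule _ ℚ 1).neg_mem
    ((mem_homogeneousSubmodule _ _).2 (isHomogeneous_X _ c)) : )).pow m

lemma sum_hc {p : PP} {N : ℕ} (h : p.totalDegree < N) :
    ∑ i ∈ Finset.range N, homogeneousComponent i p = p := by
  rw [← Finset.sum_subset (Finset.range_subset_range.2 h)
    (fun i _ hi => homogeneousComponent_eq_zero _ _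
      (by simpa using Finset.mem_range.not.1 hi))]
  exact sum_homogeneousComponent p

lemma hAsum : (∏ i : Fin 6, (1 + X (Sum.inr i)) : PP) = ∑ k ∈ Finset.range 7, Af k := by
  refine (sum_hc ?_).symm
  refine lt_of_le_of_lt ((totalDegree_finset_prod _ _).trans ?_) (by norm_num : (6:ℕ) < 7)
  refine (Finset.sum_le_card_nsmul _ _ 1 fun i _ => ?_).trans (by simp)
  exact (totalDegree_add _ _).trans (by simp)

lemma prodX_hom (t : Finset (Fin 6)) :
    (∏ i ∈ t, X (Sum.inr i) : PP).IsHomogeneous t.card := by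
  have h := IsHomogeneous.prod t (fun i => (X (Sum.inr i) : PP)) (fun _ => 1)
    (fun i _ => isHomogeneous_X _ _)
  rwa [Finset.sum_const, smul_eq_mul, mul_one] at h

lemma hA6 : Af 6 = ∏ i : Fin 6, (X (Sum.inr i) : PP) := by
  unfold Af
  have hexp : (∏ i : Fin 6, (1 + X (Sum.inr i)) : PP)
      = ∑ t ∈ Finset.univ.powerset, ∏ i ∈ t, X (Sum.inr i) := by
    rw [show (∏ i : Fin 6, (1 + X (Sum.inr i)) : PP)
        = ∏ i : Fin 6, (X (Sum.inr i) + 1) from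
      Finset.prod_congr rfl fun i _ => add_comm _ _, Finset.prod_add]
    simp
  rw [hexp, map_sum]
  rw [Finset.sum_eq_single Finset.univ]
  · rw [hc_of_isHom (prodX_hom Finset.univ), if_pos (by simp)]
  · intro t _ ht
    rw [hc_of_isHom (prodX_hom t), if_neg]
    intro h6
    exact ht (Finset.eq_univ_of_card t (by simp [← h6]))
  · intro h
    exact absurd (Finset.mem_powerset_self _) h

lemma hBsum : ((1 + X (Sum.inl 0) + X (Sum.inl 2)) * (1 + X (Sum.inl 1) + X (Sum.inl 2)) : PP)
    = ∑ j ∈ Finset.range 3, Bf j := by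
  simp only [Finset.sum_range_succ, Finset.sum_range_zero, Bf]
  norm_num
  ring

lemma split7 :
    ((∏ i : Fin 6, (1 + X (Sum.inr i))) * (1 + X (Sum.inl 0) + X (Sum.inl 2)) *
        (1 + X (Sum.inl 1) + X (Sum.inl 2)) *
        ∑ m ∈ Finset.range 8, (-X (Sum.inl 2) : PP) ^ m)
      = ∑ k ∈ Finset.range 7, ∑ j ∈ Finset.range 3, ∑ m ∈ Finset.range 8,
          Af k * Bf j * (-X (Sum.inl 2) : PP) ^ m := by
  calc ((∏ i : Fin 6, (1 + X (Sum.inr i))) * (1 + X (Sum.inl 0) + X (Sum.inl 2)) *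
        (1 + X (Sum.inl 1) + X (Sum.inl 2)) *
        ∑ m ∈ Finset.range 8, (-X (Sum.inl 2) : PP) ^ m)
      = ((∑ k ∈ Finset.range 7, Af k) * ((1 + X (Sum.inl 0) + X (Sum.inl 2)) *
          (1 + X (Sum.inl 1) + X (Sum.inl 2)))) *
        ∑ m ∈ Finset.range 8, (-X (Sum.inl 2) : PP) ^ m := by rw [← hAsum]; ring
    _ = ((∑ k ∈ Finset.range 7, Af k) * (∑ j ∈ Finset.range 3, Bf j)) *
        ∑ m ∈ Finset.range 8, (-X (Sum.inl 2) : PP) ^ m := by rw [hBsum]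
    _ = ∑ k ∈ Finset.range 7, ∑ j ∈ Finset.range 3, ∑ m ∈ Finset.range 8,
          Af k * Bf j * (-X (Sum.inl 2) : PP) ^ m := by
        rw [Finset.sum_mul_sum, Finset.sum_mul]
        refine Finset.sum_congr rfl fun k _ => ?_
        rw [Finset.sum_mul]
        refine Finset.sum_congr rfl fun j _ => ?_
        rw [Finset.mul_sum]

lemma key7 :
    homogeneousComponent 7 ((∏ i : Fin 6, (1 + X (Sum.inr i))) *
        (1 + X (Sum.inl 0) + X (Sum.inl 2)) * (1 + X (Sum.inl 1) + X (Sum.inl 2)) *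
        ∑ m ∈ Finset.range 8, (-X (Sum.inl 2) : PP) ^ m)
      = ∑ k ∈ Finset.range 7, ∑ j ∈ Finset.range 3, ∑ m ∈ Finset.range 8,
          if 7 = k + j + m then Af k * Bf j * (-X (Sum.inl 2) : PP) ^ m else 0 := by
  rw [split7, map_sum]
  refine Finset.sum_congr rfl fun k _ => ?_
  rw [map_sum]
  refine Finset.sum_congr rfl fun j hj => ?_
  rw [map_sum]
  refine Finset.sum_congr rfl fun m _ => ?_
  exact hc_of_isHom (((Af_hom k).mul (Bf_hom j hj)).mul (negX_pow_hom _ m))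

lemma split6 :
    ((∏ i : Fin 6, (1 + X (Sum.inr i))) * (1 + X (Sum.inl 0) + X (Sum.inl 2)) *
        (1 + X (Sum.inl 1) + X (Sum.inl 2)) *
        (∑ m ∈ Finset.range 7, (-X (Sum.inl 0) : PP) ^ m) *
        ∑ m ∈ Finset.range 7, (-X (Sum.inl 1) : PP) ^ m)
      = ∑ k ∈ Finset.range 7, ∑ j ∈ Finset.range 3, ∑ m ∈ Finset.range 7,
          ∑ n ∈ Finset.range 7,
          Af k * Bf j * (-X (Sum.inl 0) : PP) ^ m * (-X (Sum.inl 1) : PP) ^ n := by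
  calc ((∏ i : Fin 6, (1 + X (Sum.inr i))) * (1 + X (Sum.inl 0) + X (Sum.inl 2)) *
        (1 + X (Sum.inl 1) + X (Sum.inl 2)) *
        (∑ m ∈ Finset.range 7, (-X (Sum.inl 0) : PP) ^ m) *
        ∑ m ∈ Finset.range 7, (-X (Sum.inl 1) : PP) ^ m)
      = (((∑ k ∈ Finset.range 7, Af k) * ((1 + X (Sum.inl 0) + X (Sum.inl 2)) *
          (1 + X (Sum.inl 1) + X (Sum.inl 2)))) *
        (∑ m ∈ Finset.range 7, (-X (Sum.inl 0) : PP) ^ m)) *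
        ∑ m ∈ Finset.range 7, (-X (Sum.inl 1) : PP) ^ m := by rw [← hAsum]; ring
    _ = (((∑ k ∈ Finset.range 7, Af k) * (∑ j ∈ Finset.range 3, Bf j)) *
        (∑ m ∈ Finset.range 7, (-X (Sum.inl 0) : PP) ^ m)) *
        ∑ m ∈ Finset.range 7, (-X (Sum.inl 1) : PP) ^ m := by rw [hBsum]
    _ = ∑ k ∈ Finset.range 7, ∑ j ∈ Finset.range 3, ∑ m ∈ Finset.range 7,
          ∑ n ∈ Finset.range 7,
          Af k * Bf j * (-X (Sum.inl 0) : PP) ^ m * (-X (Sum.inl 1) : PP) ^ n := by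
        rw [Finset.sum_mul_sum, Finset.sum_mul, Finset.sum_mul]
        refine Finset.sum_congr rfl fun k _ => ?_
        rw [Finset.sum_mul, Finset.sum_mul]
        refine Finset.sum_congr rfl fun j _ => ?_
        rw [Finset.mul_sum]
        refine Eq.trans (Finset.sum_congr rfl fun n _ => ?_) Finset.sum_comm
        rw [Finset.mul_sum, Finset.sum_mul]

lemma key6 :
    homogeneousComponent 6 ((∏ i : Fin 6, (1 + X (Sum.inr i))) *
        (1 + X (Sum.inl 0) + X (Sum.inl 2)) * (1 + X (Sum.inl 1) + X (Sum.inl 2)) *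
        (∑ m ∈ Finset.range 7, (-X (Sum.inl 0) : PP) ^ m) *
        ∑ m ∈ Finset.range 7, (-X (Sum.inl 1) : PP) ^ m)
      = ∑ k ∈ Finset.range 7, ∑ j ∈ Finset.range 3, ∑ m ∈ Finset.range 7,
          ∑ n ∈ Finset.range 7,
          if 6 = k + j + m + n then
            Af k * Bf j * (-X (Sum.inl 0) : PP) ^ m * (-X (Sum.inl 1) : PP) ^ n
          else 0 := by
  rw [split6, map_sum]
  refine Finset.sum_congr rfl fun k _ => ?_
  rw [map_sum]
  refine Finset.sum_congr rfl fun j hj => ?_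
  rw [map_sum]
  refine Finset.sum_congr rfl fun m _ => ?_
  rw [map_sum]
  refine Finset.sum_congr rfl fun n _ => ?_
  exact hc_of_isHom ((((Af_hom k).mul (Bf_hom j hj)).mul (negX_pow_hom _ m)).mul
    (negX_pow_hom _ n))

set_option maxHeartbeats 2000000 in
open MvPolynomial in
/-- The excess-intersection contribution for the colored tree `T` (partition
`(2,4)` of `g = 6`): the polynomial
`(z₁+z₃)(z₂+z₃)ℓ₁⋯ℓ₆ - z₃ [c(N)/(1+z₃)]₇ - z₁z₂ [c(N)/((1+z₁)(1+z₂))]₆`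
is divisible by `z₁ z₂ z₃`. -/
theorem stmt_16 (z₁ z₂ z₃ : MvPolynomial (Fin 3 ⊕ Fin 6) ℚ)
    (ℓ : Fin 6 → MvPolynomial (Fin 3 ⊕ Fin 6) ℚ)
    (hz₁ : z₁ = X (Sum.inl 0)) (hz₂ : z₂ = X (Sum.inl 1)) (hz₃ : z₃ = X (Sum.inl 2))
    (hℓ : ∀ i, ℓ i = X (Sum.inr i)) :
    z₁ * z₂ * z₃ ∣
      ((z₁ + z₃) * (z₂ + z₃) * ∏ i, ℓ i -
        z₃ * homogeneousComponent 7
          ((∏ i, (1 + ℓ i)) * (1 + z₁ + z₃) * (1 + z₂ + z₃) *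
            ∑ m ∈ Finset.range 8, (-z₃) ^ m) -
        z₁ * z₂ * homogeneousComponent 6
          ((∏ i, (1 + ℓ i)) * (1 + z₁ + z₃) * (1 + z₂ + z₃) *
            (∑ m ∈ Finset.range 7, (-z₁) ^ m) *
            ∑ m ∈ Finset.range 7, (-z₂) ^ m)) := by
  subst hz₁ hz₂ hz₃
  simp only [hℓ]
  rw [key7, key6,
    show (∏ i, (X (Sum.inr i) : MvPolynomial (Fin 3 ⊕ Fin 6) ℚ)) = Af 6 from hA6.symm]
  refine ⟨- (3) * Af 5 - X (Sum.inl 2) ^ 2 * Af 3 + X (Sum.inl 2) ^ 3 * Af 2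
    - X (Sum.inl 2) ^ 4 * Af 1 + X (Sum.inl 2) ^ 5 * Af 0 + X (Sum.inl 1) * Af 4
    + X (Sum.inl 1) * X (Sum.inl 2) * Af 3 - X (Sum.inl 1) ^ 2 * Af 3
    - X (Sum.inl 1) ^ 2 * X (Sum.inl 2) * Af 2 + X (Sum.inl 1) ^ 3 * Af 2
    + X (Sum.inl 1) ^ 3 * X (Sum.inl 2) * Af 1 - X (Sum.inl 1) ^ 4 * Af 1
    - X (Sum.inl 1) ^ 4 * X (Sum.inl 2) * Af 0 + X (Sum.inl 1) ^ 5 * Af 0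
    + X (Sum.inl 0) * Af 4 + X (Sum.inl 0) * X (Sum.inl 2) * Af 3
    - X (Sum.inl 0) * X (Sum.inl 1) * X (Sum.inl 2) * Af 2
    + X (Sum.inl 0) * X (Sum.inl 1) ^ 2 * X (Sum.inl 2) * Af 1
    - X (Sum.inl 0) * X (Sum.inl 1) ^ 3 * X (Sum.inl 2) * Af 0
    - X (Sum.inl 0) ^ 2 * Af 3 - X (Sum.inl 0) ^ 2 * X (Sum.inl 2) * Af 2
    + X (Sum.inl 0) ^ 2 * X (Sum.inl 1) * X (Sum.inl 2) * Af 1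
    - X (Sum.inl 0) ^ 2 * X (Sum.inl 1) ^ 2 * X (Sum.inl 2) * Af 0
    + X (Sum.inl 0) ^ 3 * Af 2 + X (Sum.inl 0) ^ 3 * X (Sum.inl 2) * Af 1
    - X (Sum.inl 0) ^ 3 * X (Sum.inl 1) * X (Sum.inl 2) * Af 0
    - X (Sum.inl 0) ^ 4 * Af 1 - X (Sum.inl 0) ^ 4 * X (Sum.inl 2) * Af 0
    + X (Sum.inl 0) ^ 5 * Af 0, ?_⟩
  simp only [Finset.sum_range_succ, Finset.sum_range_zero, Bf, Nat.reduceAdd,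
    reduceIte, zero_add, add_zero]
  norm_num
  ring
end
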